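/- arXiv:2010.02982 — 3 statements merged into one kernel-verified Lean document; each statement's English description precedes it below -/
import Mathlib

section
/- Let G be a simple graph on a finite vertex type V, let u,v be distinct vertices, and let G' be the graph obtained from G by adding the edge {u,v}. Fix r ∈ ℕ. Then: (i) every vertex a whose r-ball in G differs from its r-ball in G' satisfies dist_{G'}(a,u) ≤ r or dist_{G'}(a,v) ≤ r; and (ii) if moreover every vertex of G' has degree at most d, then the set of vertices a with N_r^G(a) ≠ N_r^{G'}(a) has cardinality at most 2·∑_{i=0}^{r} d^i. -/
/-- `distLE G r a b` : there is a walk in `G` from `a` to `b` of length at most `r`. -/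
def distLE {V : Type*} (G : SimpleGraph V) (r : ℕ) (a b : V) : Prop :=
  ∃ w : G.Walk a b, w.length ≤ r

/-- The `r`-ball around a vertex `a`. -/
def ball {V : Type*} (G : SimpleGraph V) (r : ℕ) (a : V) : Set V :=
  {b | distLE G r a b}

/-!
If `b` lies in the `r`-ball of `a` in `G' = G ⊔ {uv}` but not in `G`, a walk of length `≤ r`
from `a` to `b` in `G'` must use the new edge, so its prefix up to the first endpoint of `uv` it
meets witnesses `dist_{G'}(a, u) ≤ r` or `dist_{G'}(a, v) ≤ r`. Hence the impacted vertices lie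
in `N_r^{G'}(u) ∪ N_r^{G'}(v)`, and a ball of radius `r` in a graph of maximum degree `d` has at
most `1 + d + ⋯ + d^r` vertices.
-/

open SimpleGraph

section

variable {V : Type*}

theorem distLE.mono {G : SimpleGraph V} {r s : ℕ} {a b : V} (h : distLE G r a b) (hrs : r ≤ s) :
    distLE G s a b :=
  let ⟨w, hw⟩ := h
  ⟨w, hw.trans hrs⟩

theorem distLE.symm {G : SimpleGraph V} {r : ℕ} {a b : V} (h : distLE G r a b) :
    distLE G r b a :=
  let ⟨w, hw⟩ := h
  ⟨w.reverse, by rwa [Walk.length_reverse]⟩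

theorem distLE.mono_graph {G G' : SimpleGraph V} (hle : G ≤ G') {r : ℕ} {a b : V}
    (h : distLE G r a b) : distLE G' r a b :=
  let ⟨w, hw⟩ := h
  ⟨w.mapLe hle, by rwa [Walk.length_mapLe]⟩

theorem ball_mono_graph {G G' : SimpleGraph V} (hle : G ≤ G') (r : ℕ) (a : V) :
    ball G r a ⊆ ball G' r a :=
  fun _ hb => hb.mono_graph hle

theorem distLE_or_distLE_endpoint_of_walk_sup_edge {G : SimpleGraph V} {u v a b : V}
    (w : (G ⊔ fromEdgeSet {s(u, v)}).Walk a b) :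
    distLE G w.length a b ∨ distLE (G ⊔ fromEdgeSet {s(u, v)}) w.length a u ∨
      distLE (G ⊔ fromEdgeSet {s(u, v)}) w.length a v := by
  induction w with
  | nil => exact Or.inl ⟨Walk.nil, le_rfl⟩
  | @cons a c b hac p ih =>
    rw [Walk.length_cons]
    rcases hac with hG | ⟨hnew, -⟩
    · rcases ih with ⟨q, hq⟩ | ⟨q, hq⟩ | ⟨q, hq⟩
      · exact Or.inl ⟨Walk.cons hG q, by simpa using hq⟩
      · exact Or.inr (Or.inl ⟨Walk.cons (Or.inl hG) q, by simpa using hq⟩)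
      · exact Or.inr (Or.inr ⟨Walk.cons (Or.inl hG) q, by simpa using hq⟩)
    · rcases Sym2.eq_iff.mp (Set.mem_singleton_iff.mp hnew) with ⟨rfl, -⟩ | ⟨rfl, -⟩
      · exact Or.inr (Or.inl ⟨Walk.nil, Nat.zero_le _⟩)
      · exact Or.inr (Or.inr ⟨Walk.nil, Nat.zero_le _⟩)

theorem distLE_endpoint_of_ball_ne_ball_sup_edge {G : SimpleGraph V} {u v a : V} {r : ℕ}
    (hne : ball G r a ≠ ball (G ⊔ fromEdgeSet {s(u, v)}) r a) :
    distLE (G ⊔ fromEdgeSet {s(u, v)}) r a u ∨ distLE (G ⊔ fromEdgeSet {s(u, v)}) r a v := by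
  obtain ⟨b, ⟨w, hw⟩, hbG⟩ : ∃ b ∈ ball (G ⊔ fromEdgeSet {s(u, v)}) r a, b ∉ ball G r a :=
    Set.not_subset.mp fun h => hne ((ball_mono_graph le_sup_left r a).antisymm h)
  rcases distLE_or_distLE_endpoint_of_walk_sup_edge w with hG | hu | hv
  · exact absurd (hG.mono hw) hbG
  · exact Or.inl (hu.mono hw)
  · exact Or.inr (hv.mono hw)

theorem ball_succ_subset (H : SimpleGraph V) (r : ℕ) (a : V) :
    ball H (r + 1) a ⊆ {a} ∪ ⋃ x ∈ H.neighborSet a, ball H r x := by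
  rintro b ⟨w, hw⟩
  cases w with
  | nil => exact Or.inl rfl
  | cons hac p =>
    rw [Walk.length_cons] at hw
    exact Or.inr (Set.mem_biUnion hac ⟨p, by omega⟩)

theorem ncard_ball_le_geom_sum [Finite V] (H : SimpleGraph V) {d : ℕ}
    (hd : ∀ x : V, (H.neighborSet x).ncard ≤ d) (r : ℕ) (a : V) :
    (ball H r a).ncard ≤ ∑ i ∈ Finset.range (r + 1), d ^ i := by
  induction r generalizing a with
  | zero =>
    have hball : ball H 0 a ⊆ {a} := by
      rintro b ⟨w, hw⟩
      exact (w.eq_of_length_eq_zero (Nat.le_zero.mp hw)).symm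
    simpa using Set.ncard_le_ncard hball
  | succ r ih =>
    set N := (H.neighborSet a).toFinite.toFinset
    have hN : ⋃ x ∈ H.neighborSet a, ball H r x = ⋃ x ∈ N, ball H r x := by simp [N]
    have hNcard : N.card ≤ d := by
      rw [← Set.ncard_eq_toFinset_card]
      exact hd a
    calc (ball H (r + 1) a).ncard
        ≤ ({a} ∪ ⋃ x ∈ N, ball H r x).ncard := hN ▸ Set.ncard_le_ncard (ball_succ_subset H r a)
      _ ≤ 1 + ∑ x ∈ N, (ball H r x).ncard := by
          grw [Set.ncard_union_le, Set.ncard_singleton, N.set_ncard_biUnion_le]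
      _ ≤ 1 + N.card * ∑ i ∈ Finset.range (r + 1), d ^ i := by
          grw [Finset.sum_le_card_nsmul N _ _ fun x _ => ih x, smul_eq_mul]
      _ ≤ ∑ i ∈ Finset.range (r + 2), d ^ i := by
          rw [geom_sum_succ (n := r + 1), add_comm]
          gcongr

end

theorem stmt_1_general {V : Type*} [Fintype V] (G : SimpleGraph V) (u v : V)
    (G' : SimpleGraph V) (hG' : G' = G ⊔ SimpleGraph.fromEdgeSet {s(u, v)})
    (r : ℕ) :
    (∀ a : V, ball G r a ≠ ball G' r a → distLE G' r a u ∨ distLE G' r a v) ∧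
    (∀ d : ℕ, (∀ x : V, (G'.neighborSet x).ncard ≤ d) →
      {a : V | ball G r a ≠ ball G' r a}.ncard ≤ 2 * ∑ i ∈ Finset.range (r + 1), d ^ i) := by
  subst hG'
  refine ⟨fun a => distLE_endpoint_of_ball_ne_ball_sup_edge, fun d hd => ?_⟩
  have himpacted : {a : V | ball G r a ≠ ball (G ⊔ fromEdgeSet {s(u, v)}) r a} ⊆
      ball (G ⊔ fromEdgeSet {s(u, v)}) r u ∪ ball (G ⊔ fromEdgeSet {s(u, v)}) r v :=
    fun a ha => (distLE_endpoint_of_ball_ne_ball_sup_edge ha).imp distLE.symm distLE.symm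
  grw [Set.ncard_le_ncard himpacted, Set.ncard_union_le, ncard_ball_le_geom_sum _ hd,
    ncard_ball_le_geom_sum _ hd]
  omega

theorem stmt_1 {V : Type*} [Fintype V] (G : SimpleGraph V) (u v : V) (huv : u ≠ v)
    (G' : SimpleGraph V) (hG' : G' = G ⊔ SimpleGraph.fromEdgeSet {s(u, v)})
    (r : ℕ) :
    (∀ a : V, ball G r a ≠ ball G' r a → distLE G' r a u ∨ distLE G' r a v) ∧
    (∀ d : ℕ, (∀ x : V, (G'.neighborSet x).ncard ≤ d) →
      {a : V | ball G r a ≠ ball G' r a}.ncard ≤ 2 * ∑ i ∈ Finset.range (r + 1), d ^ i) :=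
  stmt_1_general G u v G' hG' r
end

section
/- Let G be a simple graph on a finite vertex type V in which every vertex has degree at most d, let r,k ∈ ℕ with k ≥ 1, and let S be a finite set of vertices with |S| > k·∑_{i=0}^{2r} d^i. Then there is a subset T ⊆ S with |T| = k such that any two distinct elements a,b ∈ T satisfy dist_G(a,b) > 2r, i.e., there is no walk in G from a to b of length at most 2r. -/
open Classical in
/-- The ball of radius `n` around `v`. -/
noncomputable def ballF {V : Type*} [Fintype V] (G : SimpleGraph V) (n : ℕ) (v : V) :
    Finset V := Finset.univ.filter (fun u => distLE G n v u)

open Classical in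
lemma mem_ballF {V : Type*} [Fintype V] (G : SimpleGraph V) (n : ℕ) (v u : V) :
    u ∈ ballF G n v ↔ distLE G n v u := by
  simp [ballF]

lemma distLE_symm {V : Type*} {G : SimpleGraph V} {n : ℕ} {a b : V}
    (h : distLE G n a b) : distLE G n b a := by
  obtain ⟨w, hw⟩ := h
  exact ⟨w.reverse, by simpa using hw⟩

lemma ballF_card {V : Type*} [Fintype V] (G : SimpleGraph V) (d : ℕ)
    (hdeg : ∀ v : V, (G.neighborSet v).ncard ≤ d) (n : ℕ) (v : V) :
    (ballF G n v).card ≤ ∑ i ∈ Finset.range (n + 1), d ^ i := by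
  classical
  induction n generalizing v with
  | zero =>
    have : ballF G 0 v ⊆ {v} := by
      intro u hu
      rw [mem_ballF] at hu
      obtain ⟨w, hw⟩ := hu
      have := w.eq_of_length_eq_zero (Nat.le_zero.mp hw)
      simp [this]
    simpa using Finset.card_le_card this
  | succ n ih =>
    have hsub : ballF G (n + 1) v ⊆
        insert v ((G.neighborFinset v).biUnion fun w => ballF G n w) := by
      intro u hu
      rw [mem_ballF] at hu
      obtain ⟨w, hw⟩ := hu
      cases w with
      | nil => simp
      | @cons _ w' _ h q =>
        simp only [SimpleGraph.Walk.length_cons, Nat.add_le_add_iff_right] at hw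
        refine Finset.mem_insert_of_mem (Finset.mem_biUnion.mpr ⟨w', ?_, ?_⟩)
        · rwa [SimpleGraph.mem_neighborFinset]
        · exact (mem_ballF G n _ u).mpr ⟨q, hw⟩
    have hdegF : (G.neighborFinset v).card ≤ d := by
      have := hdeg v
      rwa [Set.ncard_eq_toFinset_card'] at this
    calc (ballF G (n + 1) v).card
        ≤ (insert v ((G.neighborFinset v).biUnion fun w => ballF G n w)).card :=
          Finset.card_le_card hsub
      _ ≤ 1 + ((G.neighborFinset v).biUnion fun w => ballF G n w).card := by
          rw [add_comm]; exact Finset.card_insert_le _ _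
      _ ≤ 1 + ∑ w ∈ G.neighborFinset v, (ballF G n w).card :=
          Nat.add_le_add_left (Finset.card_biUnion_le) _
      _ ≤ 1 + ∑ w ∈ G.neighborFinset v, ∑ i ∈ Finset.range (n + 1), d ^ i :=
          Nat.add_le_add_left (Finset.sum_le_sum fun w _ => ih w) _
      _ ≤ 1 + d * ∑ i ∈ Finset.range (n + 1), d ^ i := by
          rw [Finset.sum_const, smul_eq_mul]
          exact Nat.add_le_add_left (Nat.mul_le_mul_right _ hdegF) _
      _ = ∑ i ∈ Finset.range (n + 2), d ^ i := by
          rw [Finset.sum_range_succ' (fun i => d ^ i) (n + 1), Finset.mul_sum]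
          simp [pow_succ', add_comm]
  
lemma greedy {V : Type*} [Fintype V] (G : SimpleGraph V) (d r : ℕ)
    (hdeg : ∀ v : V, (G.neighborSet v).ncard ≤ d) :
    ∀ (k : ℕ) (S : Finset V),
      k * ∑ i ∈ Finset.range (2 * r + 1), d ^ i < S.card + 1 →
      ∃ T ⊆ S, T.card = k ∧
        ∀ a ∈ T, ∀ b ∈ T, a ≠ b → ¬ distLE G (2 * r) a b := by
  classical
  intro k
  induction k with
  | zero => intro S _; exact ⟨∅, by simp⟩
  | succ k ih =>
    intro S hS
    set M := ∑ i ∈ Finset.range (2 * r + 1), d ^ i with hM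
    have hM1 : 1 ≤ M := by
      calc 1 = d ^ 0 := (pow_zero d).symm
        _ ≤ M := Finset.single_le_sum (f := fun i => d ^ i) (fun _ _ => Nat.zero_le _)
            (Finset.mem_range.mpr (Nat.succ_pos _))
    have hScard : k * M + M ≤ S.card := by
      have : (k + 1) * M < S.card + 1 := hS
      rw [add_mul, one_mul] at this
      omega
    have hSne : S.Nonempty := Finset.card_pos.mp (by omega)
    obtain ⟨v, hv⟩ := hSne
    set S' := S \ ballF G (2 * r) v with hS'
    have hball : (ballF G (2 * r) v).card ≤ M := by
      have := ballF_card G d hdeg (2 * r) v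
      simpa [hM] using this
    have hS'card : k * M < S'.card + 1 := by
      have h1 : S.card - (ballF G (2 * r) v).card ≤ S'.card :=
        Finset.le_card_sdiff _ _
      omega
    obtain ⟨T, hTsub, hTcard, hTfar⟩ := ih S' hS'card
    have hvT : v ∉ T := by
      intro hvT
      have : v ∈ S' := hTsub hvT
      rw [hS', Finset.mem_sdiff] at this
      exact this.2 ((mem_ballF G (2 * r) v v).mpr ⟨SimpleGraph.Walk.nil, Nat.zero_le _⟩)
    refine ⟨insert v T, ?_, ?_, ?_⟩
    · intro x hx
      rcases Finset.mem_insert.mp hx with h | h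
      · exact h ▸ hv
      · exact (Finset.sdiff_subset) (hTsub h)
    · rw [Finset.card_insert_of_notMem hvT, hTcard]
    · intro a ha b hb hab hd
      rcases Finset.mem_insert.mp ha with ha' | ha' <;>
        rcases Finset.mem_insert.mp hb with hb' | hb'
      · exact hab (ha'.trans hb'.symm)
      · subst ha'
        have : b ∈ S' := hTsub hb'
        rw [hS', Finset.mem_sdiff] at this
        exact this.2 ((mem_ballF G (2 * r) a b).mpr hd)
      · subst hb'
        have : a ∈ S' := hTsub ha'
        rw [hS', Finset.mem_sdiff] at this
        exact this.2 ((mem_ballF G (2 * r) b a).mpr (distLE_symm hd))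
      · exact hTfar a ha' b hb' hab hd

theorem stmt_2 {V : Type*} [Fintype V] (G : SimpleGraph V) (d r k : ℕ) (hk : 1 ≤ k)
    (hdeg : ∀ v : V, (G.neighborSet v).ncard ≤ d)
    (S : Finset V) (hS : k * ∑ i ∈ Finset.range (2 * r + 1), d ^ i < S.card) :
    ∃ T ⊆ S, T.card = k ∧
      ∀ a ∈ T, ∀ b ∈ T, a ≠ b → ¬ distLE G (2 * r) a b := by
  exact greedy G d r hdeg k S (by omega)
end

section
/- Let G be a simple graph on a finite vertex type V in which every vertex has degree at most d, let r,k,s ∈ ℕ with k ≥ 1, and let I be a finite set of vertices with |I| ≤ s. Then the number of tuples a : Fin k → V such that (i) the simple graph on Fin k with an edge between i ≠ j iff dist_G(a_i,a_j) ≤ r is connected, and (ii) there exist an index i and a vertex c ∈ I with dist_G(a_i,c) ≤ r, is at most s·(∑_{i=0}^{k·r} d^i)^k. -/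
/-- The `r`-distance type (closeness graph) of a tuple `a : Fin k → V`:
an edge between `i ≠ j` iff `dist_G (a i) (a j) ≤ r`. -/
def closeGraph {V : Type*} (G : SimpleGraph V) (r : ℕ) {k : ℕ} (a : Fin k → V) :
    SimpleGraph (Fin k) where
  Adj i j := i ≠ j ∧ distLE G r (a i) (a j)
  symm := by
    constructor
    rintro i j ⟨hij, w, hw⟩
    exact ⟨hij.symm, w.reverse, by simpa using hw⟩
  loopless := by constructor; rintro i ⟨hii, -⟩; exact hii rfl

namespace distLE

variable {V : Type*} {G : SimpleGraph V}

lemma refl (r : ℕ) (a : V) : distLE G r a a := ⟨.nil, Nat.zero_le r⟩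

lemma mono_s4 {m n : ℕ} {a b : V} (h : m ≤ n) (hab : distLE G m a b) : distLE G n a b := by
  obtain ⟨w, hw⟩ := hab
  exact ⟨w, hw.trans h⟩

lemma trans {m n : ℕ} {a b c : V} (hab : distLE G m a b) (hbc : distLE G n b c) :
    distLE G (m + n) a c := by
  obtain ⟨w₁, hw₁⟩ := hab
  obtain ⟨w₂, hw₂⟩ := hbc
  exact ⟨w₁.append w₂, by rw [SimpleGraph.Walk.length_append]; omega⟩

end distLE

lemma Set.ncard_biUnion_le_mul {ι α : Type*} {t : Set ι} (ht : t.Finite) {s : ι → Set α} {d : ℕ}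
    (hs : ∀ i ∈ t, (s i).ncard ≤ d) : (⋃ i ∈ t, s i).ncard ≤ t.ncard * d := by
  have hunion : (⋃ i ∈ t, s i) = ⋃ i ∈ ht.toFinset, s i := by simp
  calc (⋃ i ∈ t, s i).ncard ≤ ∑ i ∈ ht.toFinset, (s i).ncard := by
        rw [hunion]; exact ht.toFinset.set_ncard_biUnion_le s
    _ ≤ ht.toFinset.card • d := Finset.sum_le_card_nsmul _ _ _ fun i hi => hs i (by simpa using hi)
    _ = t.ncard * d := by rw [smul_eq_mul, Set.ncard_eq_toFinset_card t ht]

lemma Set.ncard_setOf_forall_mem {ι α : Type*} [Fintype ι] (B : Set α) :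
    {a : ι → α | ∀ i, a i ∈ B}.ncard = B.ncard ^ Fintype.card ι := by
  have hpi : {a : ι → α | ∀ i, a i ∈ B} = Set.pi Set.univ fun _ => B := by
    ext a; simp [Set.mem_pi]
  rw [hpi, ← Nat.card_coe_set_eq, Nat.card_congr (Equiv.Set.univPi _), Nat.card_pi]
  simp [Nat.card_coe_set_eq]

section Ball

variable {V : Type*} {G : SimpleGraph V}

lemma setOf_distLE_succ_subset (m : ℕ) (c : V) :
    {v | distLE G (m + 1) v c} ⊆ {c} ∪ ⋃ u ∈ {v | distLE G m v c}, G.neighborSet u := by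
  rintro v ⟨w, hw⟩
  cases w with
  | nil => exact Or.inl rfl
  | cons hadj p =>
    rw [SimpleGraph.Walk.length_cons] at hw
    exact Or.inr (Set.mem_biUnion (⟨p, by omega⟩ : distLE G m _ c) hadj.symm)

lemma ncard_setOf_distLE_le [Finite V] {d : ℕ} (hdeg : ∀ v : V, (G.neighborSet v).ncard ≤ d)
    (m : ℕ) (c : V) : {v | distLE G m v c}.ncard ≤ ∑ i ∈ Finset.range (m + 1), d ^ i := by
  induction m with
  | zero =>
    have hsub : {v | distLE G 0 v c} ⊆ {c} := by
      rintro v ⟨w, hw⟩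
      exact w.eq_of_length_eq_zero (Nat.le_zero.mp hw)
    simpa using Set.ncard_le_ncard hsub
  | succ m ih =>
    calc {v | distLE G (m + 1) v c}.ncard
        ≤ ({c} : Set V).ncard + (⋃ u ∈ {v | distLE G m v c}, G.neighborSet u).ncard :=
          (Set.ncard_le_ncard (setOf_distLE_succ_subset m c)).trans (Set.ncard_union_le _ _)
      _ ≤ 1 + (∑ i ∈ Finset.range (m + 1), d ^ i) * d := by
          rw [Set.ncard_singleton]
          gcongr
          exact (Set.ncard_biUnion_le_mul (Set.toFinite _) fun u _ => hdeg u).trans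
            (Nat.mul_le_mul_right d ih)
      _ = ∑ i ∈ Finset.range (m + 1 + 1), d ^ i := by
          rw [Finset.sum_range_succ' (fun i => d ^ i) (m + 1), Finset.sum_mul]
          simp [pow_succ, add_comm]

end Ball

section CloseGraph

variable {V : Type*} {G : SimpleGraph V} {r k : ℕ} {a : Fin k → V}

lemma distLE_of_walk_closeGraph {i j : Fin k} (w : (closeGraph G r a).Walk i j) :
    distLE G (w.length * r) (a i) (a j) := by
  induction w with
  | nil => exact distLE.refl _ _
  | cons hadj _ ih =>
    exact (hadj.2.trans ih).mono_s4 (by rw [SimpleGraph.Walk.length_cons]; ring_nf; omega)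

lemma distLE_of_connected_closeGraph (hconn : (closeGraph G r a).Connected) {i : Fin k} {c : V}
    (hic : distLE G r (a i) c) (j : Fin k) : distLE G (k * r) (a j) c := by
  obtain ⟨p, hp⟩ := (hconn.preconnected j i).some.toPath
  have hlen : p.length < k := by simpa using hp.length_lt
  refine ((distLE_of_walk_closeGraph p).trans hic).mono_s4 ?_
  calc p.length * r + r = (p.length + 1) * r := by ring
    _ ≤ k * r := Nat.mul_le_mul_right r hlen

end CloseGraph

theorem stmt_4_general {V : Type*} [Fintype V] (G : SimpleGraph V) (d r k s : ℕ)
    (hdeg : ∀ v : V, (G.neighborSet v).ncard ≤ d)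
    (I : Finset V) (hI : I.card ≤ s) :
    {a : Fin k → V | (closeGraph G r a).Connected ∧
        ∃ i : Fin k, ∃ c ∈ I, distLE G r (a i) c}.ncard ≤
      s * (∑ i ∈ Finset.range (k * r + 1), d ^ i) ^ k := by
  set ball : V → Set V := fun c => {v | distLE G (k * r) v c}
  have hsub : {a : Fin k → V | (closeGraph G r a).Connected ∧
      ∃ i : Fin k, ∃ c ∈ I, distLE G r (a i) c} ⊆ ⋃ c ∈ I, {a | ∀ j, a j ∈ ball c} := by
    rintro a ⟨hconn, i, c, hcI, hic⟩
    exact Set.mem_biUnion hcI (distLE_of_connected_closeGraph hconn hic)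
  calc _ ≤ (⋃ c ∈ I, {a : Fin k → V | ∀ j, a j ∈ ball c}).ncard := Set.ncard_le_ncard hsub
    _ ≤ ∑ c ∈ I, {a : Fin k → V | ∀ j, a j ∈ ball c}.ncard := I.set_ncard_biUnion_le _
    _ ≤ ∑ _c ∈ I, (∑ i ∈ Finset.range (k * r + 1), d ^ i) ^ k := by
        gcongr with c
        rw [Set.ncard_setOf_forall_mem, Fintype.card_fin]
        exact Nat.pow_le_pow_left (ncard_setOf_distLE_le hdeg _ c) k
    _ ≤ s * (∑ i ∈ Finset.range (k * r + 1), d ^ i) ^ k := by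
        rw [Finset.sum_const, smul_eq_mul]
        gcongr

theorem stmt_4 {V : Type*} [Fintype V] (G : SimpleGraph V) (d r k s : ℕ) (hk : 1 ≤ k)
    (hdeg : ∀ v : V, (G.neighborSet v).ncard ≤ d)
    (I : Finset V) (hI : I.card ≤ s) :
    {a : Fin k → V | (closeGraph G r a).Connected ∧
        ∃ i : Fin k, ∃ c ∈ I, distLE G r (a i) c}.ncard ≤
      s * (∑ i ∈ Finset.range (k * r + 1), d ^ i) ^ k :=
  stmt_4_general G d r k s hdeg I hI
end
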